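/- arXiv:0810.3343 — 2 statements merged into one kernel-verified Lean document; each statement's English description precedes it below -/
import Mathlib

section
/- Let (Z_i)_{i=0}^{k} be an ℝ²-valued martingale (k a stopping time) with increments Δ_i = Z_i − Z_{i−1} satisfying |Δ_i| ≤ 4/√(log n) almost surely, E[Δ_i | Δ_1,…,Δ_{i−1}] = 0, and |Z_0 − Z_k| > 1/6 almost surely. Then for ℓ = 10^{−4} log n, P[k ≤ ℓ] < 1/8. -/
/-
Stop `Z` at `k`. The stopped process `Y` is again a martingale, with increments bounded by
`c = 4 / √(log n)`, and martingale increments are orthogonal in `L²`, so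
`E ‖Y ℓ - Y 0‖² ≤ ℓ c² ≤ 16 · 10⁻⁴`. On `{k ≤ ℓ}` we have `‖Y ℓ - Y 0‖ = ‖Z k - Z 0‖ > 1/6`,
so Chebyshev's inequality gives `P[k ≤ ℓ] ≤ 36 · 16 · 10⁻⁴ < 1/8`.
-/

open MeasureTheory
open scoped InnerProductSpace

namespace MeasureTheory

variable {Ω E : Type*} {m0 : MeasurableSpace Ω} {μ : Measure Ω} {ℱ : Filtration ℕ m0}

lemma stoppedProcess_succ_eq [AddCommGroup E] (u : ℕ → Ω → E) (τ : Ω → WithTop ℕ) (i : ℕ) :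
    stoppedProcess u τ (i + 1) =
      stoppedProcess u τ i + {ω | (i : WithTop ℕ) < τ ω}.indicator (u (i + 1) - u i) := by
  ext ω
  by_cases h : (i : WithTop ℕ) < τ ω
  · have h' : ((i + 1 : ℕ) : WithTop ℕ) ≤ τ ω := by
      cases hτ : τ ω with
      | top => exact le_top
      | coe t => rw [hτ] at h; exact WithTop.coe_le_coe.2 (WithTop.coe_lt_coe.1 h)
    rw [Pi.add_apply, stoppedProcess_eq_of_le (i := i + 1) h',
      stoppedProcess_eq_of_le (i := i) h.le,
      Set.indicator_of_mem (show ω ∈ {ω | (i : WithTop ℕ) < τ ω} from h), Pi.sub_apply,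
      add_sub_cancel]
  · have hle : τ ω ≤ i := not_lt.1 h
    have h' : τ ω ≤ ((i + 1 : ℕ) : WithTop ℕ) := hle.trans (by exact_mod_cast i.le_succ)
    rw [Pi.add_apply, stoppedProcess_eq_of_ge (i := i + 1) h',
      stoppedProcess_eq_of_ge (i := i) hle,
      Set.indicator_of_notMem (show ω ∉ {ω | (i : WithTop ℕ) < τ ω} from h), add_zero]

lemma stoppedProcess_natCast_eq_of_le (u : ℕ → Ω → E) {k : Ω → ℕ} {i : ℕ} {ω : Ω}
    (h : k ω ≤ i) : stoppedProcess u (fun ω => (k ω : WithTop ℕ)) i ω = u (k ω) ω :=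
  stoppedProcess_eq_of_ge (i := i) (WithTop.coe_le_coe.2 h)

lemma norm_stoppedProcess_succ_sub_le [NormedAddCommGroup E] (u : ℕ → Ω → E)
    (τ : Ω → WithTop ℕ) (i : ℕ) (ω : Ω) :
    ‖(stoppedProcess u τ (i + 1) - stoppedProcess u τ i) ω‖ ≤ ‖(u (i + 1) - u i) ω‖ := by
  rw [stoppedProcess_succ_eq, add_sub_cancel_left]
  exact norm_indicator_le_norm_self _ _

section NormedSpace

variable [NormedAddCommGroup E] [NormedSpace ℝ E] [CompleteSpace E]

lemma Martingale.condExp_sub_ae_eq_zero [SigmaFiniteFiltration μ ℱ] {M : ℕ → Ω → E}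
    (hM : Martingale M ℱ μ) {i j : ℕ} (hij : i ≤ j) : μ[M j - M i | ℱ i] =ᵐ[μ] 0 := by
  filter_upwards [condExp_sub (hM.integrable j) (hM.integrable i) (ℱ i),
    hM.condExp_ae_eq hij] with ω h1 h2
  rw [h1, Pi.sub_apply, h2, condExp_of_stronglyMeasurable (ℱ.le i) (hM.stronglyMeasurable i)
    (hM.integrable i), Pi.zero_apply, sub_self]

protected lemma Martingale.stoppedProcess [IsFiniteMeasure μ] {M : ℕ → Ω → E}
    (hM : Martingale M ℱ μ) {τ : Ω → WithTop ℕ} (hτ : IsStoppingTime ℱ τ) :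
    Martingale (stoppedProcess M τ) ℱ μ := by
  have hint := integrable_stoppedProcess hτ hM.integrable
  refine martingale_nat (hM.stronglyAdapted.stoppedProcess_of_discrete hτ) hint fun i => ?_
  have hincr_int := (hM.integrable (i + 1)).sub (hM.integrable i)
  have hrunning : MeasurableSet[ℱ i] {ω | (i : WithTop ℕ) < τ ω} := by
    convert (hτ.measurableSet_le i).compl using 1
    ext ω
    simp
  rw [stoppedProcess_succ_eq]
  filter_upwards [condExp_add (hint i) (hincr_int.indicator (ℱ.le i _ hrunning)) (ℱ i),
    condExp_indicator hincr_int hrunning, hM.condExp_sub_ae_eq_zero i.le_succ] with ω h1 h2 h3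
  rw [h1, Pi.add_apply, h2, condExp_of_stronglyMeasurable (ℱ.le i)
    ((hM.stronglyAdapted.stoppedProcess_of_discrete hτ) i) (hint i)]
  simp [Set.indicator_apply, h3]

end NormedSpace

lemma norm_sub_zero_le_of_norm_succ_sub_le [SeminormedAddCommGroup E] {x : ℕ → E} {c : ℝ}
    (hx : ∀ i, ‖x (i + 1) - x i‖ ≤ c) (n : ℕ) : ‖x n - x 0‖ ≤ n * c := by
  simpa [dist_comm, dist_eq_norm] using dist_le_range_sum_of_dist_le (f := x) (d := fun _ => c) n
    fun {k} _ => by rw [dist_comm, dist_eq_norm]; exact hx k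

lemma integrable_norm_sq_of_ae_norm_le [NormedAddCommGroup E] [IsFiniteMeasure μ] {f : Ω → E}
    (hf : AEStronglyMeasurable f μ) {C : ℝ} (hC : ∀ᵐ ω ∂μ, ‖f ω‖ ≤ C) :
    Integrable (fun ω => ‖f ω‖ ^ 2) μ :=
  Integrable.of_bound (hf.norm.pow 2) (C ^ 2) <| hC.mono fun ω hω => by
    simpa only [norm_pow, norm_norm] using pow_le_pow_left₀ (norm_nonneg _) hω 2

section InnerProductSpace

variable [NormedAddCommGroup E] [InnerProductSpace ℝ E] [CompleteSpace E] {M : ℕ → Ω → E}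

lemma Martingale.integral_inner_sub_eq_zero [IsFiniteMeasure μ] (hM : Martingale M ℱ μ)
    {i j : ℕ} (hij : i ≤ j) {X : Ω → E} (hX : StronglyMeasurable[ℱ i] X) {C : ℝ}
    (hXC : ∀ᵐ ω ∂μ, ‖X ω‖ ≤ C) :
    ∫ ω, ⟪X ω, M j ω - M i ω⟫_ℝ ∂μ = 0 := by
  have hincr := (hM.integrable j).sub (hM.integrable i)
  have hinner : Integrable (fun ω => ⟪X ω, (M j - M i) ω⟫_ℝ) μ := by
    refine (hincr.norm.const_mul C).mono'
      ((hX.mono (ℱ.le i)).aestronglyMeasurable.inner hincr.aestronglyMeasurable) ?_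
    filter_upwards [hXC] with ω hω
    exact (norm_inner_le_norm _ _).trans (mul_le_mul_of_nonneg_right hω (norm_nonneg _))
  calc ∫ ω, ⟪X ω, M j ω - M i ω⟫_ℝ ∂μ
      = ∫ ω, μ[fun ω => ⟪X ω, (M j - M i) ω⟫_ℝ | ℱ i] ω ∂μ := (integral_condExp (ℱ.le i)).symm
    _ = ∫ ω, ⟪X ω, μ[M j - M i | ℱ i] ω⟫_ℝ ∂μ :=
      integral_congr_ae (condExp_bilin_of_stronglyMeasurable_left (innerSL ℝ) hX hinner hincr)
    _ = ∫ _, (0 : ℝ) ∂μ := integral_congr_ae <| (hM.condExp_sub_ae_eq_zero hij).mono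
      fun ω hω => by simp only [hω, Pi.zero_apply, inner_zero_right]
    _ = 0 := integral_zero _ _

lemma Martingale.integral_norm_sub_sq_add [IsFiniteMeasure μ] (hM : Martingale M ℱ μ)
    {i j : ℕ} (hij : i ≤ j) {C D : ℝ} (hi : ∀ᵐ ω ∂μ, ‖M i ω - M 0 ω‖ ≤ C)
    (hj : ∀ᵐ ω ∂μ, ‖M j ω - M i ω‖ ≤ D) :
    ∫ ω, ‖M j ω - M 0 ω‖ ^ 2 ∂μ =
      ∫ ω, ‖M i ω - M 0 ω‖ ^ 2 ∂μ + ∫ ω, ‖M j ω - M i ω‖ ^ 2 ∂μ := by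
  have hmeas : ∀ a b, AEStronglyMeasurable (fun ω => M a ω - M b ω) μ := fun a b =>
    ((hM.integrable a).sub (hM.integrable b)).aestronglyMeasurable
  have hinner : Integrable (fun ω => 2 * ⟪M i ω - M 0 ω, M j ω - M i ω⟫_ℝ) μ :=
    (Integrable.of_bound ((hmeas i 0).inner (hmeas j i)) (C * D) <| by
      filter_upwards [hi, hj] with ω h1 h2
      exact (norm_inner_le_norm _ _).trans
        (mul_le_mul h1 h2 (norm_nonneg _) ((norm_nonneg _).trans h1))).const_mul 2
  have horth : ∫ ω, ⟪M i ω - M 0 ω, M j ω - M i ω⟫_ℝ ∂μ = 0 :=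
    hM.integral_inner_sub_eq_zero hij
      ((hM.stronglyMeasurable i).sub ((hM.stronglyMeasurable 0).mono (ℱ.mono i.zero_le))) hi
  have hexpand : ∀ ω, ‖M j ω - M 0 ω‖ ^ 2 = ‖M i ω - M 0 ω‖ ^ 2
      + 2 * ⟪M i ω - M 0 ω, M j ω - M i ω⟫_ℝ + ‖M j ω - M i ω‖ ^ 2 := fun ω => by
    rw [← norm_add_sq_real, sub_add_sub_cancel']
  have hi_sq := integrable_norm_sq_of_ae_norm_le (hmeas i 0) hi
  simp_rw [hexpand]
  rw [integral_add (hi_sq.fun_add hinner) (integrable_norm_sq_of_ae_norm_le (hmeas j i) hj),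
    integral_add hi_sq hinner, integral_const_mul, horth, mul_zero, add_zero]

lemma Martingale.integral_norm_sub_sq_le [IsProbabilityMeasure μ] (hM : Martingale M ℱ μ)
    {c : ℝ} (hc : ∀ᵐ ω ∂μ, ∀ i, ‖M (i + 1) ω - M i ω‖ ≤ c) (n : ℕ) :
    ∫ ω, ‖M n ω - M 0 ω‖ ^ 2 ∂μ ≤ n * c ^ 2 := by
  induction n with
  | zero => simp
  | succ n ih =>
    have hincr : ∀ᵐ ω ∂μ, ‖M (n + 1) ω - M n ω‖ ≤ c := hc.mono fun ω hω => hω n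
    have hincr_sq : ∫ ω, ‖M (n + 1) ω - M n ω‖ ^ 2 ∂μ ≤ c ^ 2 := by
      simpa using integral_mono_ae (integrable_norm_sq_of_ae_norm_le
          ((hM.integrable (n + 1)).sub (hM.integrable n)).aestronglyMeasurable hincr)
        (integrable_const (c ^ 2)) (hincr.mono fun ω hω => pow_le_pow_left₀ (norm_nonneg _) hω 2)
    rw [hM.integral_norm_sub_sq_add n.le_succ (hc.mono fun ω hω =>
      norm_sub_zero_le_of_norm_succ_sub_le (x := (M · ω)) hω n) hincr]
    push_cast
    linarith

lemma Martingale.sq_mul_measureReal_norm_sub_ge_le [IsProbabilityMeasure μ] (hM : Martingale M ℱ μ)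
    {c : ℝ} (hc : ∀ᵐ ω ∂μ, ∀ i, ‖M (i + 1) ω - M i ω‖ ≤ c) (n : ℕ) {ε : ℝ} (hε : 0 ≤ ε) :
    ε ^ 2 * μ.real {ω | ε ≤ ‖M n ω - M 0 ω‖} ≤ n * c ^ 2 := by
  have hint : Integrable (fun ω => ‖M n ω - M 0 ω‖ ^ 2) μ :=
    integrable_norm_sq_of_ae_norm_le ((hM.integrable n).sub (hM.integrable 0)).aestronglyMeasurable
      (hc.mono fun ω hω => norm_sub_zero_le_of_norm_succ_sub_le (x := (M · ω)) hω n)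
  calc ε ^ 2 * μ.real {ω | ε ≤ ‖M n ω - M 0 ω‖}
      ≤ ε ^ 2 * μ.real {ω | ε ^ 2 ≤ ‖M n ω - M 0 ω‖ ^ 2} := by
        gcongr ?_ * ?_
        exact measureReal_mono fun ω hω => pow_le_pow_left₀ hε hω 2
    _ ≤ ∫ ω, ‖M n ω - M 0 ω‖ ^ 2 ∂μ :=
        mul_meas_ge_le_integral_of_nonneg (.of_forall fun _ => sq_nonneg _) hint _
    _ ≤ n * c ^ 2 := hM.integral_norm_sub_sq_le hc n

end InnerProductSpace

end MeasureTheory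

lemma natFloor_mul_mul_div_sqrt_sq_le {a t : ℝ} (ha : 0 ≤ a) (ht : 0 ≤ t) (b : ℝ) :
    (⌊a * t⌋₊ : ℝ) * (b / √t) ^ 2 ≤ a * b ^ 2 := by
  rw [div_pow, Real.sq_sqrt ht]
  calc (⌊a * t⌋₊ : ℝ) * (b ^ 2 / t) ≤ a * t * (b ^ 2 / t) := by
        gcongr; exact Nat.floor_le (by positivity)
    _ = a * b ^ 2 * (t / t) := by ring
    _ ≤ a * b ^ 2 := mul_le_of_le_one_right (by positivity) (div_self_le_one t)

theorem small_steps_take_long_general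
    {Ω : Type*} {m0 : MeasurableSpace Ω} {ℙ : Measure Ω} [IsProbabilityMeasure ℙ]
    {ℱ : Filtration ℕ m0}
    (n : ℕ)
    (Z : ℕ → Ω → EuclideanSpace ℝ (Fin 2)) (hZ : Martingale Z ℱ ℙ)
    (k : Ω → ℕ) (hk : IsStoppingTime ℱ (fun ω => (k ω : WithTop ℕ)))
    (hinc : ∀ i : ℕ, 1 ≤ i → ∀ᵐ ω ∂ℙ,
      ‖Z i ω - Z (i - 1) ω‖ ≤ 4 / Real.sqrt (Real.log n))
    (hfar : ∀ᵐ ω ∂ℙ, 1 / 6 < ‖Z 0 ω - Z (k ω) ω‖) :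
    ℙ {ω | (k ω : ℝ) ≤ 10 ^ (-(4 : ℤ)) * Real.log n} < 1 / 8 := by
  set L := ⌊10 ^ (-(4 : ℤ)) * Real.log n⌋₊
  set Y := stoppedProcess Z (fun ω => (k ω : WithTop ℕ))
  have hlog : 0 ≤ Real.log n := Real.log_natCast_nonneg n
  have hY : ∀ᵐ ω ∂ℙ, ∀ i, ‖Y (i + 1) ω - Y i ω‖ ≤ 4 / Real.sqrt (Real.log n) :=
    ae_all_iff.2 fun i => (hinc (i + 1) i.succ_pos).mono fun ω hω =>
      (norm_stoppedProcess_succ_sub_le Z _ i ω).trans hω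
  have hset : {ω | (k ω : ℝ) ≤ 10 ^ (-(4 : ℤ)) * Real.log n} = {ω | k ω ≤ L} := by
    ext ω; exact (Nat.le_floor_iff (mul_nonneg (by norm_num) hlog)).symm
  have hfar' : {ω | k ω ≤ L} ≤ᵐ[ℙ] {ω | 1 / 6 ≤ ‖Y L ω - Y 0 ω‖} := by
    filter_upwards [hfar] with ω hω hkL
    have hYL : Y L ω = Z (k ω) ω := stoppedProcess_natCast_eq_of_le Z hkL
    have hY0 : Y 0 ω = Z 0 ω := stoppedProcess_eq_of_le (i := 0) bot_le
    change 1 / 6 ≤ ‖Y L ω - Y 0 ω‖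
    rw [hYL, hY0, norm_sub_rev]
    exact hω.le
  have hmarkov : (1 / 6 : ℝ) ^ 2 * ℙ.real {ω | k ω ≤ L} ≤ 10 ^ (-(4 : ℤ)) * 4 ^ 2 :=
    (mul_le_mul_of_nonneg_left (ENNReal.toReal_mono (measure_ne_top _ _) (measure_mono_ae hfar'))
      (by positivity)).trans <| ((hZ.stoppedProcess hk).sq_mul_measureReal_norm_sub_ge_le hY L
        (by norm_num)).trans (natFloor_mul_mul_div_sqrt_sq_le (by positivity) hlog 4)
  rw [hset, ← ofReal_measureReal, ENNReal.ofReal_lt_iff_lt_toReal measureReal_nonneg (by simp)]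
  norm_num at hmarkov ⊢
  linarith

/-- for an ℝ²-valued martingale Z with increments bounded by 4/√(log n)
and |Z_0 − Z_k| > 1/6 a.s. at the stopping time k, with ℓ = 10⁻⁴ log n one has
P[k ≤ ℓ] < 1/8. -/
theorem small_steps_take_long
    {Ω : Type*} {m0 : MeasurableSpace Ω} {ℙ : Measure Ω} [IsProbabilityMeasure ℙ]
    {ℱ : Filtration ℕ m0}
    (n : ℕ) (hn : 2 ≤ n)
    (Z : ℕ → Ω → EuclideanSpace ℝ (Fin 2)) (hZ : Martingale Z ℱ ℙ)
    (k : Ω → ℕ) (hk : IsStoppingTime ℱ (fun ω => (k ω : WithTop ℕ)))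
    (hinc : ∀ i : ℕ, 1 ≤ i → ∀ᵐ ω ∂ℙ,
      ‖Z i ω - Z (i - 1) ω‖ ≤ 4 / Real.sqrt (Real.log n))
    (hfar : ∀ᵐ ω ∂ℙ, 1 / 6 < ‖Z 0 ω - Z (k ω) ω‖) :
    ℙ {ω | (k ω : ℝ) ≤ 10 ^ (-(4 : ℤ)) * Real.log n} < 1 / 8 :=
  small_steps_take_long_general n Z hZ k hk hinc hfar
end

section
/- Let Ω ⊂ ℝ^d be α-thick with constant C. Then for every x ∈ ∂Ω there exists a Borel measure μ_x on ℝ^d such that: (1) μ_x(Ω) = 0; (2) μ_x(B(y,r)) ≤ r^{d−α} for all y ∈ ℝ^d, r > 0; (3) μ_x(B(x,r)) ≥ c·r^{d−α} for all r < 1, where c = c(α, d, C) > 0 depends only on α, d, C. -/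
open MeasureTheory Metric Set
open scoped ENNReal NNReal

/-- β-dimensional Hausdorff content: infimum of Σ r_j^β over countable covers
of K by balls B(x_j, r_j). -/
noncomputable def hausdorffContent (d : ℕ) (β : ℝ)
    (K : Set (EuclideanSpace ℝ (Fin d))) : ℝ≥0∞ :=
  ⨅ (f : ℕ → EuclideanSpace ℝ (Fin d) × ℝ)
    (_ : K ⊆ ⋃ j, ball (f j).1 (f j).2),
    ∑' j, ENNReal.ofReal ((f j).2 ^ β)

/-- A domain Ω ⊂ ℝ^d is α-thick with constant C if for every x ∈ ∂Ω and r < 1,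
H^{d−α}(B(x,r) \ Ω) ≥ C r^{d−α}. -/
def IsAlphaThick (d : ℕ) (α C : ℝ) (Ω : Set (EuclideanSpace ℝ (Fin d))) : Prop :=
  ∀ x ∈ frontier Ω, ∀ r : ℝ, 0 < r → r < 1 →
    ENNReal.ofReal (C * r ^ ((d : ℝ) - α)) ≤ hausdorffContent d ((d : ℝ) - α) (ball x r \ Ω)

/-!
Write `β = d - α`. For `β = 0` the Dirac mass at `x` works. For `β > 0` pick `θ ≤ 1/2` with
`θ ^ β ≤ C / 2` and set `t = θ / 4`. At each scale `ρ = t ^ (k + 1)` thickness and subadditivity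
of the content leave `H^β(S_k) ≥ (C / 2) ρ ^ β` for the part `S_k` of `Ωᶜ` in the annulus
`θ ρ ≤ |z - x| ≤ ρ`. Frostman's lemma turns `S_k` into a measure `ν_k` on its closure with mass
comparable to `ρ ^ β` and `ν_k (B(y, r)) ≲ r ^ β`: the dyadic content of a cube is shared out
among its children in proportion to their dyadic contents; realised on a segment of length equal
to that content, this nests subintervals exactly as the cubes are nested, and `ν_k` is the image
of Lebesgue measure under the map sending a point of the segment to the intersection of its cubes.
Consecutive annuli are separated at a geometric rate, so a ball of radius `r` meets at most one
annulus of radius `> r`, and the normalised sum of the `ν_k` is the required measure.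
-/

open Filter
open scoped Topology Function

local notation "𝔼" d:max => EuclideanSpace ℝ (Fin d)

namespace Frostman

noncomputable section

variable {d : ℕ} {β : ℝ}

section HausdorffContent

theorem hausdorffContent_le_tsum {K : Set (𝔼 d)} (f : ℕ → 𝔼 d × ℝ)
    (hf : K ⊆ ⋃ j, ball (f j).1 (f j).2) :
    hausdorffContent d β K ≤ ∑' j, ENNReal.ofReal ((f j).2 ^ β) :=
  iInf₂_le f hf

theorem hausdorffContent_mono {A B : Set (𝔼 d)} (h : A ⊆ B) :
    hausdorffContent d β A ≤ hausdorffContent d β B :=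
  le_iInf₂ fun f hf => iInf₂_le f (h.trans hf)

theorem hausdorffContent_le_of_subset_ball (hβ : 0 < β) {K : Set (𝔼 d)} {z : 𝔼 d} {r : ℝ}
    (h : K ⊆ ball z r) : hausdorffContent d β K ≤ ENNReal.ofReal (r ^ β) := by
  refine (hausdorffContent_le_tsum (fun j => (z, if j = 0 then r else 0)) fun y hy =>
    mem_iUnion.2 ⟨0, h hy⟩).trans_eq ?_
  rw [tsum_eq_single 0 fun j hj => by simp [hj, Real.zero_rpow hβ.ne']]
  simp

theorem hausdorffContent_empty (hβ : 0 < β) : hausdorffContent d β ∅ = 0 :=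
  le_antisymm ((hausdorffContent_le_of_subset_ball hβ (z := 0) (r := 0) (empty_subset _)).trans
    (by simp [Real.zero_rpow hβ.ne'])) zero_le

theorem hausdorffContent_union_le (A B : Set (𝔼 d)) :
    hausdorffContent d β (A ∪ B) ≤ hausdorffContent d β A + hausdorffContent d β B := by
  refine ENNReal.le_iInf₂_add_iInf₂ fun f hf g hg => ?_
  let e := Equiv.natSumNatEquivNat
  let F : ℕ ⊕ ℕ → 𝔼 d × ℝ := Sum.elim f g
  have hcover : A ∪ B ⊆ ⋃ n, ball (F (e.symm n)).1 (F (e.symm n)).2 := by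
    rintro z (hz | hz)
    · obtain ⟨j, hj⟩ := mem_iUnion.1 (hf hz)
      exact mem_iUnion.2 ⟨e (.inl j), by simpa [F] using hj⟩
    · obtain ⟨j, hj⟩ := mem_iUnion.1 (hg hz)
      exact mem_iUnion.2 ⟨e (.inr j), by simpa [F] using hj⟩
  calc hausdorffContent d β (A ∪ B)
      ≤ ∑' n, ENNReal.ofReal ((F (e.symm n)).2 ^ β) := hausdorffContent_le_tsum _ hcover
    _ = ∑' i, ENNReal.ofReal ((F i).2 ^ β) := e.symm.tsum_eq fun i => ENNReal.ofReal ((F i).2 ^ β)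
    _ = _ := ENNReal.summable.tsum_sum ENNReal.summable

theorem hausdorffContent_biUnion_finset_le (hβ : 0 < β) {ι : Type*} (s : Finset ι)
    (K : ι → Set (𝔼 d)) :
    hausdorffContent d β (⋃ i ∈ s, K i) ≤ ∑ i ∈ s, hausdorffContent d β (K i) := by
  classical
  induction s using Finset.induction with
  | empty => simp [hausdorffContent_empty hβ]
  | insert a s ha ih =>
    rw [Finset.set_biUnion_insert, Finset.sum_insert ha]
    exact (hausdorffContent_union_le _ _).trans (add_le_add le_rfl ih)

end HausdorffContent

section DyadicCube

def dyadicCube (n : ℤ) (k : Fin d → ℤ) : Set (𝔼 d) :=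
  {y | ∀ i, 2 ^ n * y i ∈ Ico (k i : ℝ) (k i + 1)}

def closedDyadicCube (n : ℤ) (k : Fin d → ℤ) : Set (𝔼 d) :=
  {y | ∀ i, 2 ^ n * y i ∈ Icc (k i : ℝ) (k i + 1)}

def childIndex (c : Fin d → Bool) (k : Fin d → ℤ) : Fin d → ℤ :=
  fun i => 2 * k i + (c i).toNat

def dyadicCenter (n : ℤ) (k : Fin d → ℤ) : 𝔼 d :=
  WithLp.toLp 2 fun i => ((k i : ℝ) + 2⁻¹) / 2 ^ n

variable {n : ℤ} {k : Fin d → ℤ}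

theorem dyadicCube_subset_closedDyadicCube : dyadicCube n k ⊆ closedDyadicCube n k :=
  fun _ hy i => Ico_subset_Icc_self (hy i)

theorem isClosed_closedDyadicCube : IsClosed (closedDyadicCube n k) := by
  simp only [closedDyadicCube, ofPred_forall]
  exact isClosed_iInter fun i => isClosed_Icc.preimage (by fun_prop)

theorem mem_dyadicCube_floor (n : ℤ) (y : 𝔼 d) : y ∈ dyadicCube n fun i => ⌊2 ^ n * y i⌋ :=
  fun _ => ⟨Int.floor_le _, Int.lt_floor_add_one _⟩

theorem dyadicCenter_mem_dyadicCube : dyadicCenter n k ∈ dyadicCube n k := by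
  intro i
  have h : (2 : ℝ) ^ n * dyadicCenter n k i = k i + 2⁻¹ :=
    mul_div_cancel₀ _ (zpow_ne_zero n two_ne_zero)
  rw [h]
  constructor <;> norm_num

theorem childIndex_inj {c c' : Fin d → Bool} {k' : Fin d → ℤ}
    (h : childIndex c k = childIndex c' k') : c = c' ∧ k = k' := by
  have key i : c i = c' i ∧ k i = k' i := by
    have := congrFun h i
    simp only [childIndex] at this
    cases hc : c i <;> cases hc' : c' i <;> simp [hc, hc'] at this ⊢ <;> omega
  exact ⟨funext fun i => (key i).1, funext fun i => (key i).2⟩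

private theorem two_zpow_succ (n : ℤ) : (2 : ℝ) ^ (n + 1) = 2 * 2 ^ n := by
  rw [zpow_add_one₀ two_ne_zero, mul_comm]

theorem dyadicCube_childIndex_subset (c : Fin d → Bool) :
    dyadicCube (n + 1) (childIndex c k) ⊆ dyadicCube n k := by
  intro y hy i
  have h := hy i
  have hc : ((c i).toNat : ℝ) ≤ 1 := by cases c i <;> simp
  simp only [childIndex, two_zpow_succ, mem_Ico] at h ⊢
  push_cast at h
  constructor <;> nlinarith [(c i).toNat.cast_nonneg (α := ℝ)]

theorem dyadicCube_eq_iUnion_childIndex :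
    dyadicCube n k = ⋃ c : Fin d → Bool, dyadicCube (n + 1) (childIndex c k) := by
  refine subset_antisymm (fun y hy => mem_iUnion.2 ?_)
    (iUnion_subset dyadicCube_childIndex_subset)
  refine ⟨fun i => decide ((2 * k i + 1 : ℝ) ≤ 2 ^ (n + 1) * y i), fun i => ?_⟩
  have h := hy i
  simp only [mem_Ico, two_zpow_succ] at h ⊢
  by_cases hc : (2 * k i + 1 : ℝ) ≤ 2 * 2 ^ n * y i <;>
    simp only [childIndex, hc, decide_true, decide_false, Bool.toNat_true, Bool.toNat_false] <;>
    push_cast <;> constructor <;> linarith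

theorem abs_sub_le_of_mem_closedDyadicCube {y z : 𝔼 d} (hy : y ∈ closedDyadicCube n k)
    (hz : z ∈ closedDyadicCube n k) (i : Fin d) : |y i - z i| ≤ 2 ^ (-n) := by
  have h2 : (0 : ℝ) < 2 ^ n := by positivity
  have hy' := hy i
  have hz' := hz i
  rw [mem_Icc] at hy' hz'
  have h : |2 ^ n * y i - 2 ^ n * z i| ≤ 1 := abs_le.2 ⟨by linarith, by linarith⟩
  rw [← mul_sub, abs_mul, abs_of_pos h2] at h
  rw [zpow_neg, ← one_div, le_div_iff₀ h2]
  linarith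

theorem dist_le_of_mem_closedDyadicCube {y z : 𝔼 d} (hy : y ∈ closedDyadicCube n k)
    (hz : z ∈ closedDyadicCube n k) : dist y z ≤ √d * 2 ^ (-n) := by
  rw [EuclideanSpace.dist_eq]
  calc √(∑ i, dist (y i) (z i) ^ 2) ≤ √(∑ _i : Fin d, ((2 : ℝ) ^ (-n)) ^ 2) :=
        Real.sqrt_le_sqrt <| Finset.sum_le_sum fun i _ => pow_le_pow_left₀ dist_nonneg
          (abs_sub_le_of_mem_closedDyadicCube hy hz i) 2
    _ = √d * 2 ^ (-n) := by
        rw [Finset.sum_const, Finset.card_univ, Fintype.card_fin, nsmul_eq_mul,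
          Real.sqrt_mul (Nat.cast_nonneg d), Real.sqrt_sq (by positivity)]

theorem closedDyadicCube_subset_ball :
    closedDyadicCube n k ⊆ ball (dyadicCenter n k) ((√d + 1) * 2 ^ (-n)) := fun y hy =>
  calc dist y (dyadicCenter n k) ≤ √d * 2 ^ (-n) := dist_le_of_mem_closedDyadicCube hy
        (dyadicCube_subset_closedDyadicCube dyadicCenter_mem_dyadicCube)
    _ < (√d + 1) * 2 ^ (-n) := by linarith [zpow_pos (two_pos (α := ℝ)) (-n)]

theorem exists_zpow_two_mem_Icc {ρ : ℝ} (hρ : 0 < ρ) :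
    ∃ g : ℤ, (2 : ℝ) ^ (-g) ∈ Icc ρ (2 * ρ) := by
  obtain ⟨n, hn, hn'⟩ := exists_mem_Ico_zpow hρ one_lt_two
  rw [two_zpow_succ] at hn'
  refine ⟨-(n + 1), ?_, ?_⟩ <;> rw [neg_neg, two_zpow_succ] <;> linarith

def nearIndices (n : ℤ) (y : 𝔼 d) : Finset (Fin d → ℤ) :=
  Finset.Icc (fun i => ⌊2 ^ n * y i⌋ - 2) (fun i => ⌊2 ^ n * y i⌋ + 2)

theorem card_nearIndices (n : ℤ) (y : 𝔼 d) : (nearIndices n y).card = 5 ^ d := by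
  simp [nearIndices, Pi.card_Icc, Int.card_Icc, show ∀ a : ℤ, (a + 2 + 1 - (a - 2)).toNat = 5 by
    omega]

theorem mem_nearIndices {y : 𝔼 d} {ρ : ℝ} (hρ : ρ ≤ 2 ^ (-n))
    (h : (closedDyadicCube n k ∩ closedBall y ρ).Nonempty) : k ∈ nearIndices n y := by
  obtain ⟨z, hz, hzy⟩ := h
  have h2 : (0 : ℝ) < 2 ^ n := by positivity
  have hscale : 2 ^ n * ρ ≤ 1 := by
    rwa [zpow_neg, ← one_div, le_div_iff₀ h2, mul_comm] at hρ
  have hcoord i : |2 ^ n * z i - 2 ^ n * y i| ≤ 1 := by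
    rw [← mul_sub, abs_mul, abs_of_pos h2]
    exact (mul_le_mul_of_nonneg_left ((PiLp.dist_apply_le z y i).trans (mem_closedBall.1 hzy))
      h2.le).trans hscale
  refine Finset.mem_Icc.2 ⟨fun i => ?_, fun i => ?_⟩ <;>
  · have hzi := hz i
    have hfl := Int.floor_le (2 ^ n * y i)
    have hfl' := Int.lt_floor_add_one (2 ^ n * y i)
    rw [mem_Icc] at hzi
    have := abs_le.1 (hcoord i)
    simp only
    rw [← Int.cast_le (R := ℝ)]
    push_cast
    linarith

end DyadicCube

section DyadicContent

variable (β) (K : Set (𝔼 d))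

def cubeWeight (n : ℤ) : ℝ≥0 := (((2 : ℝ) ^ (-n)) ^ β).toNNReal

open Classical in
/-- `dyadicContentAux β K m n k` is the least total `cubeWeight` of a family of dyadic subcubes
of depth at most `m` in `dyadicCube n k` covering the part of `K` in it. -/
def dyadicContentAux : ℕ → ℤ → (Fin d → ℤ) → ℝ≥0
  | 0, n, k => if (K ∩ dyadicCube n k).Nonempty then cubeWeight β n else 0
  | m + 1, n, k => min (cubeWeight β n) (∑ c, dyadicContentAux m (n + 1) (childIndex c k))

def dyadicContent (n : ℤ) (k : Fin d → ℤ) : ℝ≥0 := ⨅ m, dyadicContentAux β K m n k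

variable {β K} {n : ℤ} {k : Fin d → ℤ}

theorem cubeWeight_le (hβ : 0 ≤ β) {r : ℝ} (h : 2 ^ (-n) ≤ r) :
    (cubeWeight β n : ℝ≥0∞) ≤ ENNReal.ofReal (r ^ β) :=
  ENNReal.ofReal_le_ofReal (Real.rpow_le_rpow (by positivity) h hβ)

theorem dyadicContentAux_eq_zero (h : K ∩ dyadicCube n k = ∅) (m : ℕ) :
    dyadicContentAux β K m n k = 0 := by
  induction m generalizing n k with
  | zero => simp [dyadicContentAux, h]
  | succ m ih =>
    have hchild c : K ∩ dyadicCube (n + 1) (childIndex c k) = ∅ :=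
      subset_empty_iff.1 (h ▸ inter_subset_inter_right K (dyadicCube_childIndex_subset c))
    simp [dyadicContentAux, ih (hchild _)]

theorem dyadicContentAux_succ_le (m : ℕ) (n : ℤ) (k : Fin d → ℤ) :
    dyadicContentAux β K (m + 1) n k ≤ dyadicContentAux β K m n k := by
  induction m generalizing n k with
  | zero =>
    by_cases h : (K ∩ dyadicCube n k).Nonempty
    · simp [dyadicContentAux, h]
    · simp [dyadicContentAux_eq_zero (not_nonempty_iff_eq_empty.1 h)]
  | succ m ih =>
    exact min_le_min le_rfl (Finset.sum_le_sum fun c _ => ih _ _)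

theorem tendsto_dyadicContentAux (n : ℤ) (k : Fin d → ℤ) :
    Tendsto (dyadicContentAux β K · n k) atTop (𝓝 (dyadicContent β K n k)) :=
  tendsto_atTop_ciInf (antitone_nat_of_succ_le fun m => dyadicContentAux_succ_le m n k)
    (OrderBot.bddBelow _)

theorem dyadicContent_eq_min (n : ℤ) (k : Fin d → ℤ) :
    dyadicContent β K n k =
      min (cubeWeight β n) (∑ c, dyadicContent β K (n + 1) (childIndex c k)) :=
  tendsto_nhds_unique ((tendsto_dyadicContentAux n k).comp (tendsto_add_atTop_nat 1)) <|
    tendsto_const_nhds.min <| tendsto_finsetSum _ fun _ _ => tendsto_dyadicContentAux _ _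

theorem dyadicContent_le_cubeWeight (n : ℤ) (k : Fin d → ℤ) :
    dyadicContent β K n k ≤ cubeWeight β n :=
  (dyadicContent_eq_min n k).trans_le (min_le_left _ _)

theorem dyadicContent_le_sum (n : ℤ) (k : Fin d → ℤ) :
    dyadicContent β K n k ≤ ∑ c, dyadicContent β K (n + 1) (childIndex c k) :=
  (dyadicContent_eq_min n k).trans_le (min_le_right _ _)

theorem nonempty_of_dyadicContent_ne_zero (h : dyadicContent β K n k ≠ 0) :
    (K ∩ dyadicCube n k).Nonempty := by
  by_contra hK
  refine h (le_antisymm ((ciInf_le (OrderBot.bddBelow _) 0).trans ?_) zero_le)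
  rw [dyadicContentAux_eq_zero (not_nonempty_iff_eq_empty.1 hK)]

theorem hausdorffContent_inter_dyadicCube_le (hβ : 0 < β) (n : ℤ) (k : Fin d → ℤ) :
    hausdorffContent d β (K ∩ dyadicCube n k) ≤
      ENNReal.ofReal ((√d + 1) ^ β) * cubeWeight β n := by
  refine (hausdorffContent_le_of_subset_ball hβ (inter_subset_right.trans
    (dyadicCube_subset_closedDyadicCube.trans closedDyadicCube_subset_ball))).trans_eq ?_
  rw [Real.mul_rpow (by positivity) (by positivity), ENNReal.ofReal_mul (by positivity)]
  rfl

theorem hausdorffContent_le_dyadicContentAux (hβ : 0 < β) (m : ℕ) (n : ℤ) (k : Fin d → ℤ) :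
    hausdorffContent d β (K ∩ dyadicCube n k) ≤
      ENNReal.ofReal ((√d + 1) ^ β) * dyadicContentAux β K m n k := by
  induction m generalizing n k with
  | zero =>
    by_cases h : (K ∩ dyadicCube n k).Nonempty
    · simpa [dyadicContentAux, h] using hausdorffContent_inter_dyadicCube_le hβ n k
    · simp [not_nonempty_iff_eq_empty.1 h, hausdorffContent_empty hβ]
  | succ m ih =>
    rcases min_choice (cubeWeight β n) (∑ c, dyadicContentAux β K m (n + 1) (childIndex c k))
      with h | h <;> rw [dyadicContentAux, h]
    · exact hausdorffContent_inter_dyadicCube_le hβ n k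
    · rw [ENNReal.ofNNReal_finsetSum, Finset.mul_sum, dyadicCube_eq_iUnion_childIndex,
        inter_iUnion]
      calc hausdorffContent d β (⋃ c, K ∩ dyadicCube (n + 1) (childIndex c k))
          ≤ ∑ c, hausdorffContent d β (K ∩ dyadicCube (n + 1) (childIndex c k)) := by
            simpa using hausdorffContent_biUnion_finset_le hβ Finset.univ
              fun c => K ∩ dyadicCube (n + 1) (childIndex c k)
        _ ≤ _ := Finset.sum_le_sum fun c _ => ih _ _

theorem hausdorffContent_le_dyadicContent (hβ : 0 < β) (n : ℤ) (k : Fin d → ℤ) :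
    hausdorffContent d β (K ∩ dyadicCube n k) ≤
      ENNReal.ofReal ((√d + 1) ^ β) * dyadicContent β K n k := by
  rw [dyadicContent, ENNReal.coe_iInf,
    ENNReal.mul_iInf_of_ne (by positivity) ENNReal.ofReal_ne_top]
  exact le_iInf fun m => hausdorffContent_le_dyadicContentAux hβ m n k

end DyadicContent

section Slots

variable {ι : Type*} [Fintype ι] (ℓ : ι → ℝ≥0)

def slotWeight (j : ℕ) : ℝ≥0 :=
  if h : j < Fintype.card ι then ℓ ((Fintype.equivFin ι).symm ⟨j, h⟩) else 0

def slotStart (j : ℕ) : ℝ := ∑ i ∈ Finset.range j, (slotWeight ℓ i : ℝ)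

def slot (a : ℝ) (c : ι) : Set ℝ :=
  Ico (a + slotStart ℓ (Fintype.equivFin ι c)) (a + slotStart ℓ (Fintype.equivFin ι c + 1))

theorem monotone_slotStart : Monotone (slotStart ℓ) :=
  monotone_nat_of_le_succ fun j => by simp [slotStart, Finset.sum_range_succ]

theorem slotStart_succ_equivFin (c : ι) :
    slotStart ℓ (Fintype.equivFin ι c + 1) = slotStart ℓ (Fintype.equivFin ι c) + ℓ c := by
  simp [slotStart, Finset.sum_range_succ, slotWeight]

theorem slotStart_card : slotStart ℓ (Fintype.card ι) = ∑ c, (ℓ c : ℝ) := by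
  rw [slotStart, ← Fin.sum_univ_eq_sum_range, ← (Fintype.equivFin ι).symm.sum_comp]
  simp [slotWeight]

theorem slot_eq (a : ℝ) (c : ι) :
    slot ℓ a c = Ico (a + slotStart ℓ (Fintype.equivFin ι c))
      (a + slotStart ℓ (Fintype.equivFin ι c) + ℓ c) := by
  rw [slot, slotStart_succ_equivFin, add_assoc]

theorem pairwise_disjoint_slot (a : ℝ) : Pairwise (Disjoint on slot ℓ a) := fun c c' h => by
  have := (monotone_slotStart ℓ).pairwise_disjoint_on_Ico_succ
    (Fin.val_injective.ne ((Fintype.equivFin ι).injective.ne h))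
  rw [Function.onFun, slot, slot, Ico_disjoint_Ico, min_add_add_left, max_add_add_left,
    add_le_add_iff_left, ← Ico_disjoint_Ico]
  exact this

theorem iUnion_slot (a : ℝ) : ⋃ c, slot ℓ a c = Ico a (a + ∑ c, (ℓ c : ℝ)) := by
  have hmono := monotone_slotStart ℓ
  rw [← slotStart_card]
  refine subset_antisymm (iUnion_subset fun c => Ico_subset_Ico ?_ ?_) fun t ⟨ht, ht'⟩ => ?_
  · simpa [slotStart] using hmono (Nat.zero_le (Fintype.equivFin ι c))
  · simpa using hmono (Fintype.equivFin ι c).isLt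
  have key : ∀ N, t < a + slotStart ℓ N →
      ∃ j < N, t ∈ Ico (a + slotStart ℓ j) (a + slotStart ℓ (j + 1)) := by
    intro N
    induction N with
    | zero => exact fun h => absurd ht (not_le.2 (by simpa [slotStart] using h))
    | succ N ih =>
      intro hN
      by_cases h : t < a + slotStart ℓ N
      · obtain ⟨j, hj, hmem⟩ := ih h
        exact ⟨j, hj.trans N.lt_succ_self, hmem⟩
      · exact ⟨N, N.lt_succ_self, not_lt.1 h, hN⟩
  obtain ⟨j, hj, hmem⟩ := key _ ht'
  exact mem_iUnion.2 ⟨(Fintype.equivFin ι).symm ⟨j, hj⟩, by simpa [slot] using hmem⟩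

end Slots

section Tiles

/-- A dyadic cube together with the subinterval of the coding line assigned to it. -/
structure Tile (d : ℕ) where
  gen : ℤ
  idx : Fin d → ℤ
  pos : ℝ
  len : ℝ≥0

namespace Tile

def cube (s : Tile d) : Set (𝔼 d) := dyadicCube s.gen s.idx

def interval (s : Tile d) : Set ℝ := Ico s.pos (s.pos + s.len)

instance : Preorder (Tile d) := Preorder.lift fun s => (s.interval, s.cube)

def closedCube (s : Tile d) : Set (𝔼 d) := closedDyadicCube s.gen s.idx

def center (s : Tile d) : 𝔼 d := dyadicCenter s.gen s.idx

theorem center_mem_cube (s : Tile d) : s.center ∈ s.cube := dyadicCenter_mem_dyadicCube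

theorem cube_subset_closedCube (s : Tile d) : s.cube ⊆ s.closedCube :=
  dyadicCube_subset_closedDyadicCube

theorem le_def {s s' : Tile d} : s ≤ s' ↔ s.interval ⊆ s'.interval ∧ s.cube ⊆ s'.cube :=
  Iff.rfl

end Tile

variable (β) (K : Set (𝔼 d))

def childLen (s : Tile d) (c : Fin d → Bool) : ℝ≥0 :=
  s.len * (dyadicContent β K (s.gen + 1) (childIndex c s.idx) /
    ∑ c', dyadicContent β K (s.gen + 1) (childIndex c' s.idx))

def childTile (s : Tile d) (c : Fin d → Bool) : Tile d where
  gen := s.gen + 1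
  idx := childIndex c s.idx
  pos := s.pos + slotStart (childLen β K s) (Fintype.equivFin _ c)
  len := childLen β K s c

variable {β K} {s : Tile d}

theorem childTile_interval (c : Fin d → Bool) :
    (childTile β K s c).interval = slot (childLen β K s) s.pos c :=
  (slot_eq _ _ _).symm

theorem sum_childLen_le : ∑ c, childLen β K s c ≤ s.len := by
  simp_rw [childLen, ← Finset.mul_sum, ← Finset.sum_div]
  exact mul_le_of_le_one_right' (div_self_le_one _)

theorem sum_childLen_eq (hs : s.len ≤ dyadicContent β K s.gen s.idx) :
    ∑ c, childLen β K s c = s.len := by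
  simp_rw [childLen, ← Finset.mul_sum, ← Finset.sum_div]
  rcases eq_or_ne (∑ c, dyadicContent β K (s.gen + 1) (childIndex c s.idx)) 0 with h | h
  · have : s.len = 0 := le_antisymm (hs.trans ((dyadicContent_le_sum _ _).trans h.le)) zero_le
    simp [this]
  · rw [div_self h, mul_one]

theorem childLen_le (hs : s.len ≤ dyadicContent β K s.gen s.idx) (c : Fin d → Bool) :
    childLen β K s c ≤ dyadicContent β K (s.gen + 1) (childIndex c s.idx) := by
  rw [childLen]
  rcases eq_or_ne (∑ c', dyadicContent β K (s.gen + 1) (childIndex c' s.idx)) 0 with h | h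
  · simp [h]
  rw [mul_div_assoc', div_le_iff₀ (pos_iff_ne_zero.2 h), mul_comm]
  exact mul_le_mul_right (hs.trans (dyadicContent_le_sum _ _)) _

theorem childTile_le (c : Fin d → Bool) : childTile β K s c ≤ s := by
  refine Tile.le_def.2 ⟨?_, dyadicCube_childIndex_subset c⟩
  rw [childTile_interval, Tile.interval]
  refine ((subset_iUnion (slot (childLen β K s) s.pos) c).trans (iUnion_slot _ _).subset).trans
    (Ico_subset_Ico_right ?_)
  rw [← NNReal.coe_sum]
  exact add_le_add_right (NNReal.coe_le_coe.2 sum_childLen_le) _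

theorem iUnion_childTile_interval (hs : s.len ≤ dyadicContent β K s.gen s.idx) :
    ⋃ c, (childTile β K s c).interval = s.interval := by
  simp_rw [childTile_interval, iUnion_slot, Tile.interval, ← NNReal.coe_sum, sum_childLen_eq hs]

theorem pairwise_disjoint_childTile_interval :
    Pairwise (Disjoint on fun c => (childTile β K s c).interval) := by
  simpa only [Function.onFun, childTile_interval] using pairwise_disjoint_slot _ s.pos

end Tiles

section CodingTree

variable (β) (K : Set (𝔼 d)) (g₀ : ℤ) (k₀ : Fin d → ℤ)

def tile : (m : ℕ) → (Fin m → Fin d → Bool) → Tile d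
  | 0, _ => ⟨g₀, k₀, 0, dyadicContent β K g₀ k₀⟩
  | m + 1, w => childTile β K (tile m (Fin.init w)) (w (Fin.last m))

variable {β K g₀ k₀}

theorem tile_snoc (m : ℕ) (u : Fin m → Fin d → Bool) (c : Fin d → Bool) :
    tile β K g₀ k₀ (m + 1) (Fin.snoc u c) = childTile β K (tile β K g₀ k₀ m u) c := by
  simp [tile]

theorem tile_gen (m : ℕ) (w : Fin m → Fin d → Bool) : (tile β K g₀ k₀ m w).gen = g₀ + m := by
  induction m with
  | zero => simp [tile]
  | succ m ih => simp [tile, childTile, ih, add_assoc]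

theorem tile_len_le (m : ℕ) (w : Fin m → Fin d → Bool) :
    (tile β K g₀ k₀ m w).len ≤
      dyadicContent β K (tile β K g₀ k₀ m w).gen (tile β K g₀ k₀ m w).idx := by
  induction m with
  | zero => exact le_rfl
  | succ m ih => exact childLen_le (ih _) _

theorem tile_le_tile_take {m m' : ℕ} (h : m ≤ m') (w : Fin m' → Fin d → Bool) :
    tile β K g₀ k₀ m' w ≤ tile β K g₀ k₀ m (Fin.take m h w) := by
  induction m', h using Nat.le_induction with
  | base => rw [Fin.take_eq_self]
  | succ m' h ih => exact (childTile_le _).trans (ih (Fin.init w))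

theorem iUnion_tile_interval (m : ℕ) :
    ⋃ w, (tile β K g₀ k₀ m w).interval = Ico 0 (dyadicContent β K g₀ k₀ : ℝ) := by
  induction m with
  | zero => simp [tile, Tile.interval, iUnion_const]
  | succ m ih =>
    rw [← ih]
    refine subset_antisymm (iUnion_subset fun w => ?_) (iUnion_subset fun u => ?_)
    · exact (Tile.le_def.1 (childTile_le _)).1.trans
        (subset_iUnion (fun u => (tile β K g₀ k₀ m u).interval) (Fin.init w))
    · rw [← iUnion_childTile_interval (tile_len_le m u)]
      refine iUnion_subset fun c => ?_
      rw [← tile_snoc]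
      exact subset_iUnion (fun w => (tile β K g₀ k₀ (m + 1) w).interval) (Fin.snoc u c)

theorem pairwise_disjoint_tile_interval (m : ℕ) :
    Pairwise (Disjoint on fun w => (tile β K g₀ k₀ m w).interval) := by
  induction m with
  | zero => exact fun w w' h => absurd (Subsingleton.elim w w') h
  | succ m ih =>
    intro w w' h
    by_cases hinit : Fin.init w = Fin.init w'
    · have hlast : w (Fin.last m) ≠ w' (Fin.last m) := fun hl =>
        h (by rw [← Fin.snoc_init_self w, ← Fin.snoc_init_self w', hinit, hl])
      simp only [Function.onFun, tile]
      rw [← hinit]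
      exact pairwise_disjoint_childTile_interval hlast
    · exact (ih hinit).mono (Tile.le_def.1 (childTile_le _)).1 (Tile.le_def.1 (childTile_le _)).1

theorem tile_idx_injective (m : ℕ) :
    Function.Injective fun w : Fin m → Fin d → Bool => (tile β K g₀ k₀ m w).idx := by
  induction m with
  | zero => exact fun w w' _ => Subsingleton.elim w w'
  | succ m ih =>
    intro w w' h
    obtain ⟨hc, hk⟩ := childIndex_inj h
    rw [← Fin.snoc_init_self w, ← Fin.snoc_init_self w', ih hk, hc]

theorem eq_of_mem_tile_interval {m : ℕ} {w w' : Fin m → Fin d → Bool} {t : ℝ}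
    (h : t ∈ (tile β K g₀ k₀ m w).interval) (h' : t ∈ (tile β K g₀ k₀ m w').interval) : w = w' :=
  by_contra fun hne => (pairwise_disjoint_tile_interval m hne).notMem_of_mem_left h h'

theorem exists_mem_tile_interval {t : ℝ} (ht : t ∈ Ico 0 (dyadicContent β K g₀ k₀ : ℝ))
    (m : ℕ) : ∃ w, t ∈ (tile β K g₀ k₀ m w).interval :=
  mem_iUnion.1 ((iUnion_tile_interval m).symm ▸ ht)

theorem tile_cube_subset (m : ℕ) (w : Fin m → Fin d → Bool) :
    (tile β K g₀ k₀ m w).cube ⊆ dyadicCube g₀ k₀ :=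
  (Tile.le_def.1 (tile_le_tile_take (Nat.zero_le m) w)).2

theorem inter_tile_cube_nonempty {m : ℕ} {w : Fin m → Fin d → Bool} {t : ℝ}
    (ht : t ∈ (tile β K g₀ k₀ m w).interval) : (K ∩ (tile β K g₀ k₀ m w).cube).Nonempty := by
  refine nonempty_of_dyadicContent_ne_zero (ne_bot_of_le_ne_bot ?_ (tile_len_le m w))
  rintro hlen
  simp [Tile.interval, hlen] at ht

theorem dist_le_of_mem_tile_closedCube {m : ℕ} {w : Fin m → Fin d → Bool} {y z : 𝔼 d}
    (hy : y ∈ (tile β K g₀ k₀ m w).closedCube) (hz : z ∈ (tile β K g₀ k₀ m w).closedCube) :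
    dist y z ≤ √d * 2 ^ (-g₀) * (1 / 2) ^ m := by
  refine (dist_le_of_mem_closedDyadicCube hy hz).trans_eq ?_
  rw [tile_gen, neg_add, zpow_add₀ two_ne_zero, zpow_neg (2 : ℝ) (m : ℤ), zpow_natCast, one_div,
    inv_pow, mul_assoc]

end CodingTree

section CodingMap

variable (β) (K : Set (𝔼 d)) (g₀ : ℤ) (k₀ : Fin d → ℤ)

def codingApprox (m : ℕ) (t : ℝ) : 𝔼 d :=
  ∑ w, (tile β K g₀ k₀ m w).interval.indicator (fun _ => (tile β K g₀ k₀ m w).center) t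

def codingMap (t : ℝ) : 𝔼 d := limUnder atTop (codingApprox β K g₀ k₀ · t)

variable {β K g₀ k₀}

theorem codingApprox_eq {m : ℕ} {w : Fin m → Fin d → Bool} {t : ℝ}
    (ht : t ∈ (tile β K g₀ k₀ m w).interval) :
    codingApprox β K g₀ k₀ m t = (tile β K g₀ k₀ m w).center := by
  rw [codingApprox, Finset.sum_eq_single_of_mem w (Finset.mem_univ _) fun w' _ hw' =>
    indicator_of_notMem (fun h => hw' (eq_of_mem_tile_interval h ht)) _, indicator_of_mem ht]

theorem codingApprox_of_notMem {t : ℝ} (ht : t ∉ Ico 0 (dyadicContent β K g₀ k₀ : ℝ)) (m : ℕ) :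
    codingApprox β K g₀ k₀ m t = 0 :=
  Finset.sum_eq_zero fun w _ => indicator_of_notMem
    (fun h => ht (iUnion_tile_interval m ▸ mem_iUnion_of_mem w h)) _

theorem dist_codingApprox_succ_le (t : ℝ) (m : ℕ) :
    dist (codingApprox β K g₀ k₀ m t) (codingApprox β K g₀ k₀ (m + 1) t) ≤
      √d * 2 ^ (-g₀) * (1 / 2) ^ m := by
  by_cases ht : t ∈ Ico 0 (dyadicContent β K g₀ k₀ : ℝ)
  · obtain ⟨w, hw⟩ := exists_mem_tile_interval ht (m + 1)
    have hle := Tile.le_def.1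
      (childTile_le (β := β) (K := K) (s := tile β K g₀ k₀ m (Fin.init w)) (w (Fin.last m)))
    rw [codingApprox_eq hw, codingApprox_eq (hle.1 hw)]
    exact dist_le_of_mem_tile_closedCube (Tile.cube_subset_closedCube _ (Tile.center_mem_cube _))
      (Tile.cube_subset_closedCube _ (hle.2 (Tile.center_mem_cube _)))
  · rw [codingApprox_of_notMem ht, codingApprox_of_notMem ht, dist_self]
    positivity

theorem tendsto_codingApprox (t : ℝ) :
    Tendsto (codingApprox β K g₀ k₀ · t) atTop (𝓝 (codingMap β K g₀ k₀ t)) :=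
  tendsto_nhds_limUnder <| cauchySeq_tendsto_of_complete <|
    cauchySeq_of_le_geometric _ _ (by norm_num) (dist_codingApprox_succ_le t)

theorem measurable_codingMap : Measurable (codingMap β K g₀ k₀) :=
  measurable_of_tendsto_metrizable (fun _ => Finset.measurable_sum _ fun _ _ =>
    measurable_const.indicator measurableSet_Ico) (tendsto_pi_nhds.2 tendsto_codingApprox)

theorem codingMap_mem_closedCube {m : ℕ} {w : Fin m → Fin d → Bool} {t : ℝ}
    (ht : t ∈ (tile β K g₀ k₀ m w).interval) :
    codingMap β K g₀ k₀ t ∈ (tile β K g₀ k₀ m w).closedCube := by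
  have hbase : t ∈ Ico 0 (dyadicContent β K g₀ k₀ : ℝ) :=
    iUnion_tile_interval m ▸ mem_iUnion_of_mem w ht
  refine isClosed_closedDyadicCube.mem_of_tendsto (tendsto_codingApprox t) ?_
  filter_upwards [eventually_ge_atTop m] with m' hm'
  obtain ⟨w', hw'⟩ := exists_mem_tile_interval hbase m'
  have hle := Tile.le_def.1 (tile_le_tile_take (β := β) (K := K) (g₀ := g₀) (k₀ := k₀) hm' w')
  rw [codingApprox_eq hw', ← eq_of_mem_tile_interval (hle.1 hw') ht]
  exact Tile.cube_subset_closedCube _ (hle.2 (Tile.center_mem_cube _))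

theorem codingMap_mem_closure {t : ℝ} (ht : t ∈ Ico 0 (dyadicContent β K g₀ k₀ : ℝ)) :
    codingMap β K g₀ k₀ t ∈ closure (K ∩ dyadicCube g₀ k₀) := by
  choose w hw using exists_mem_tile_interval ht
  choose q hqK hq using fun m => inter_tile_cube_nonempty (hw m)
  refine mem_closure_of_tendsto (b := atTop) (f := q) ?_
    (Eventually.of_forall fun m => ⟨hqK m, tile_cube_subset m (w m) (hq m)⟩)
  refine tendsto_iff_dist_tendsto_zero.2 (squeeze_zero (fun _ => dist_nonneg) (fun m =>
    dist_le_of_mem_tile_closedCube (Tile.cube_subset_closedCube _ (hq m))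
      (codingMap_mem_closedCube (hw m))) ?_)
  simpa using (tendsto_pow_atTop_nhds_zero_of_lt_one (r := (1 / 2 : ℝ)) (by norm_num)
    (by norm_num)).const_mul (√d * 2 ^ (-g₀))

end CodingMap

section CubeMeasure

variable (β) (K : Set (𝔼 d)) (g₀ : ℤ) (k₀ : Fin d → ℤ)

def cubeMeasure : Measure (𝔼 d) :=
  (volume.restrict (Ico 0 (dyadicContent β K g₀ k₀ : ℝ))).map (codingMap β K g₀ k₀)

variable {β K g₀ k₀}

theorem cubeMeasure_apply {A : Set (𝔼 d)} (hA : MeasurableSet A) :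
    cubeMeasure β K g₀ k₀ A =
      volume (codingMap β K g₀ k₀ ⁻¹' A ∩ Ico 0 (dyadicContent β K g₀ k₀ : ℝ)) := by
  rw [cubeMeasure, Measure.map_apply measurable_codingMap hA,
    Measure.restrict_apply (measurable_codingMap hA)]

theorem cubeMeasure_univ : cubeMeasure β K g₀ k₀ univ = dyadicContent β K g₀ k₀ := by
  simp [cubeMeasure_apply MeasurableSet.univ]

theorem cubeMeasure_compl_closure :
    cubeMeasure β K g₀ k₀ (closure (K ∩ dyadicCube g₀ k₀))ᶜ = 0 := by
  rw [cubeMeasure_apply isClosed_closure.measurableSet.compl,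
    ← measure_empty (μ := (volume : Measure ℝ))]
  congr 1
  exact eq_empty_of_forall_notMem fun t ⟨h, ht⟩ => h (codingMap_mem_closure ht)

theorem volume_tile_interval_le (m : ℕ) (w : Fin m → Fin d → Bool) :
    volume (tile β K g₀ k₀ m w).interval ≤ cubeWeight β (g₀ + m) := by
  rw [Tile.interval, Real.volume_Ico, add_sub_cancel_left, ENNReal.ofReal_coe_nnreal,
    ENNReal.coe_le_coe, ← tile_gen m w]
  exact (tile_len_le m w).trans (dyadicContent_le_cubeWeight _ _)

theorem cubeMeasure_ball_le_of_le_zpow (m : ℕ) (y : 𝔼 d) {ρ : ℝ} (hρ : ρ ≤ 2 ^ (-(g₀ + m))) :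
    cubeMeasure β K g₀ k₀ (ball y ρ) ≤ 5 ^ d * cubeWeight β (g₀ + m) := by
  classical
  let W := Finset.univ.filter fun w : Fin m → Fin d → Bool =>
    ((tile β K g₀ k₀ m w).closedCube ∩ closedBall y ρ).Nonempty
  have hcover : codingMap β K g₀ k₀ ⁻¹' ball y ρ ∩ Ico 0 (dyadicContent β K g₀ k₀ : ℝ) ⊆
      ⋃ w ∈ W, (tile β K g₀ k₀ m w).interval := by
    rintro t ⟨hty, ht⟩
    obtain ⟨w, hw⟩ := exists_mem_tile_interval ht m
    exact mem_biUnion (Finset.mem_filter.2 ⟨Finset.mem_univ _,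
      _, codingMap_mem_closedCube hw, ball_subset_closedBall hty⟩) hw
  have hcard : W.card ≤ 5 ^ d := by
    rw [← card_nearIndices (g₀ + m) y]
    refine Finset.card_le_card_of_injOn (fun w => (tile β K g₀ k₀ m w).idx) (fun w hw => ?_)
      (tile_idx_injective m).injOn
    have hw := (Finset.mem_filter.1 hw).2
    rw [Tile.closedCube, tile_gen] at hw
    exact mem_nearIndices hρ hw
  calc cubeMeasure β K g₀ k₀ (ball y ρ)
      ≤ volume (⋃ w ∈ W, (tile β K g₀ k₀ m w).interval) :=
        (cubeMeasure_apply measurableSet_ball).trans_le (measure_mono hcover)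
    _ ≤ ∑ w ∈ W, volume (tile β K g₀ k₀ m w).interval := measure_biUnion_finset_le _ _
    _ ≤ W.card • (cubeWeight β (g₀ + m) : ℝ≥0∞) :=
        Finset.sum_le_card_nsmul _ _ _ fun w _ => volume_tile_interval_le m w
    _ ≤ 5 ^ d * cubeWeight β (g₀ + m) := by
        rw [nsmul_eq_mul]
        exact mul_le_mul_left (by exact_mod_cast hcard) _

theorem cubeMeasure_ball_le (hβ : 0 < β) (y : 𝔼 d) {ρ : ℝ} (hρ : 0 < ρ) :
    cubeMeasure β K g₀ k₀ (ball y ρ) ≤ 5 ^ d * ENNReal.ofReal ((2 * ρ) ^ β) := by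
  rcases le_or_gt ((2 : ℝ) ^ (-g₀)) ρ with hbig | hsmall
  · calc cubeMeasure β K g₀ k₀ (ball y ρ)
        ≤ cubeMeasure β K g₀ k₀ univ := measure_mono (subset_univ _)
      _ ≤ cubeWeight β g₀ :=
        cubeMeasure_univ.trans_le (ENNReal.coe_le_coe.2 (dyadicContent_le_cubeWeight _ _))
      _ ≤ ENNReal.ofReal ((2 * ρ) ^ β) := cubeWeight_le hβ.le (by linarith)
      _ ≤ _ := le_mul_of_one_le_left zero_le (one_le_pow₀ (by norm_num))
  obtain ⟨g, hg, hg'⟩ := exists_zpow_two_mem_Icc hρ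
  have hg₀ : g₀ ≤ g := by
    have : (2 : ℝ) ^ (-g) < 2 ^ (1 - g₀) := by
      rw [sub_eq_add_neg, zpow_add₀ two_ne_zero, zpow_one]
      linarith
    have := (zpow_lt_zpow_iff_right₀ one_lt_two).1 this
    omega
  obtain ⟨m, rfl⟩ : ∃ m : ℕ, g = g₀ + m := ⟨(g - g₀).toNat, by omega⟩
  exact (cubeMeasure_ball_le_of_le_zpow m y hg).trans
    (mul_le_mul_right (cubeWeight_le hβ.le hg') _)

theorem exists_measure_of_subset_closedBall (hβ : 0 < β) {S : Set (𝔼 d)} {x : 𝔼 d} {ρ : ℝ}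
    (hρ : 0 < ρ) (hS : S ⊆ closedBall x ρ) :
    ∃ ν : Measure (𝔼 d), ν (closure S)ᶜ = 0 ∧ ν univ ≤ ENNReal.ofReal ((2 * ρ) ^ β) ∧
      hausdorffContent d β S ≤ 5 ^ d * (ENNReal.ofReal ((√d + 1) ^ β) * ν univ) ∧
      ∀ y r, 0 < r → ν (ball y r) ≤ 5 ^ d * ENNReal.ofReal ((2 * r) ^ β) := by
  obtain ⟨g, hg, hg'⟩ := exists_zpow_two_mem_Icc hρ
  have hcover : S ⊆ ⋃ k ∈ nearIndices g x, S ∩ dyadicCube g k := fun z hz =>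
    mem_biUnion (mem_nearIndices hg ⟨z, dyadicCube_subset_closedDyadicCube
      (mem_dyadicCube_floor g z), hS hz⟩) ⟨hz, mem_dyadicCube_floor g z⟩
  obtain ⟨k, -, hk⟩ := (nearIndices g x).exists_max_image
    (fun k => hausdorffContent d β (S ∩ dyadicCube g k))
    (Finset.nonempty_Icc.2 fun _ => by simp only; omega)
  refine ⟨cubeMeasure β S g k, measure_mono_null (compl_subset_compl.2 (closure_mono
    inter_subset_left)) cubeMeasure_compl_closure, ?_, ?_, fun y r => cubeMeasure_ball_le hβ y⟩
  · exact cubeMeasure_univ.trans_le ((ENNReal.coe_le_coe.2 (dyadicContent_le_cubeWeight _ _)).trans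
      (cubeWeight_le hβ.le hg'))
  · calc hausdorffContent d β S
        ≤ ∑ k ∈ nearIndices g x, hausdorffContent d β (S ∩ dyadicCube g k) :=
          (hausdorffContent_mono hcover).trans (hausdorffContent_biUnion_finset_le hβ _ _)
      _ ≤ 5 ^ d * hausdorffContent d β (S ∩ dyadicCube g k) := by
          refine (Finset.sum_le_card_nsmul _ _ _ hk).trans_eq ?_
          rw [card_nearIndices, nsmul_eq_mul, Nat.cast_pow, Nat.cast_ofNat]
      _ ≤ 5 ^ d * (ENNReal.ofReal ((√d + 1) ^ β) * cubeMeasure β S g k univ) := by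
          rw [cubeMeasure_univ]
          exact mul_le_mul_right (hausdorffContent_le_dyadicContent hβ g k) _

end CubeMeasure

section Annuli

theorem hausdorffContent_diff_ball_ge (hβ : 0 < β) {A : Set (𝔼 d)} {x : 𝔼 d} {C ρ θ : ℝ}
    (hθ : 0 ≤ θ) (hθC : θ ^ β ≤ C / 2) (hρ : 0 ≤ ρ)
    (hA : ENNReal.ofReal (C * ρ ^ β) ≤ hausdorffContent d β A) :
    ENNReal.ofReal (C / 2 * ρ ^ β) ≤ hausdorffContent d β (A \ ball x (θ * ρ)) := by
  have hC : 0 ≤ C / 2 := (Real.rpow_nonneg hθ β).trans hθC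
  have hball : hausdorffContent d β (ball x (θ * ρ)) ≤ ENNReal.ofReal (C / 2 * ρ ^ β) :=
    (hausdorffContent_le_of_subset_ball hβ subset_rfl).trans <| ENNReal.ofReal_le_ofReal <| by
      rw [Real.mul_rpow hθ hρ]
      exact mul_le_mul_of_nonneg_right hθC (Real.rpow_nonneg hρ β)
  refine (ENNReal.add_le_add_iff_right (ENNReal.ofReal_ne_top (r := C / 2 * ρ ^ β))).1 ?_
  calc ENNReal.ofReal (C / 2 * ρ ^ β) + ENNReal.ofReal (C / 2 * ρ ^ β)
      = ENNReal.ofReal (C * ρ ^ β) := by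
        rw [← ENNReal.ofReal_add (by positivity) (by positivity)]
        ring_nf
    _ ≤ hausdorffContent d β (A \ ball x (θ * ρ) ∪ ball x (θ * ρ)) :=
        hA.trans (hausdorffContent_mono fun z hz => sdiff_union_self.symm ▸ Or.inl hz)
    _ ≤ _ := (hausdorffContent_union_le _ _).trans (add_le_add le_rfl hball)

theorem exists_measure_on_annulus (hβ : 0 < β) {Ω : Set (𝔼 d)} (hΩ : IsOpen Ω) {x : 𝔼 d}
    {C ρ θ : ℝ} (hρ : 0 < ρ) (hθ : 0 ≤ θ) (hθC : θ ^ β ≤ C / 2)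
    (hthick : ENNReal.ofReal (C * ρ ^ β) ≤ hausdorffContent d β (ball x ρ \ Ω)) :
    ∃ ν : Measure (𝔼 d), ν (Ωᶜ ∩ (closedBall x ρ \ ball x (θ * ρ)))ᶜ = 0 ∧
      ν univ ≤ ENNReal.ofReal ((2 * ρ) ^ β) ∧
      ENNReal.ofReal (C / 2 / (5 ^ d * (√d + 1) ^ β) * ρ ^ β) ≤ ν univ ∧
      ∀ y r, 0 < r → ν (ball y r) ≤ 5 ^ d * ENNReal.ofReal ((2 * r) ^ β) := by
  have hS : (ball x ρ \ Ω) \ ball x (θ * ρ) ⊆ closedBall x ρ := fun z hz =>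
    ball_subset_closedBall hz.1.1
  obtain ⟨ν, hsupp, hmass, hlow, hball⟩ := exists_measure_of_subset_closedBall hβ hρ hS
  have hclosure :
      closure ((ball x ρ \ Ω) \ ball x (θ * ρ)) ⊆ Ωᶜ ∩ (closedBall x ρ \ ball x (θ * ρ)) :=
    closure_minimal (fun z ⟨⟨hzρ, hzΩ⟩, hzθ⟩ => ⟨hzΩ, ball_subset_closedBall hzρ, hzθ⟩)
      (hΩ.isClosed_compl.inter (isClosed_closedBall.sdiff isOpen_ball))
  have hlow' := (hausdorffContent_diff_ball_ge hβ hθ hθC hρ.le hthick).trans hlow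
  rw [← mul_assoc, show (5 : ℝ≥0∞) ^ d = ENNReal.ofReal (5 ^ d) by simp,
    ← ENNReal.ofReal_mul (by positivity)] at hlow'
  refine ⟨ν, measure_mono_null (compl_subset_compl.2 hclosure) hsupp, hmass, ?_, hball⟩
  rw [div_mul_eq_mul_div, ENNReal.ofReal_div_of_pos (by positivity)]
  exact ENNReal.div_le_of_le_mul' hlow'

end Annuli

section Scales

variable {x : 𝔼 d} {θ t : ℝ}

theorem pow_succ_lt_of_mem_annuli (ht : 0 < t) (hθ : 4 * t ≤ θ) (ht1 : t ≤ 1) {j k : ℕ}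
    (hjk : j < k) {y p q : 𝔼 d} {r : ℝ}
    (hp : p ∈ ball y r ∩ (closedBall x (t ^ (j + 1)) \ ball x (θ * t ^ (j + 1))))
    (hq : q ∈ ball y r ∩ (closedBall x (t ^ (k + 1)) \ ball x (θ * t ^ (k + 1)))) :
    t ^ (k + 1) < r := by
  obtain ⟨hpy, -, hpx⟩ := hp
  obtain ⟨hqy, hqx, -⟩ := hq
  rw [mem_ball, not_lt] at hpx
  rw [mem_ball] at hpy hqy
  rw [mem_closedBall] at hqx
  have hkj : t ^ (k + 1) ≤ t * t ^ (j + 1) := by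
    rw [← pow_succ']
    exact pow_le_pow_of_le_one ht.le ht1 (by omega)
  have htri := dist_triangle4 p y q x
  rw [dist_comm y q] at htri
  have hpos : 0 < t ^ (j + 1) := by positivity
  by_contra! hr
  nlinarith [mul_le_mul_of_nonneg_right hθ hpos.le]

theorem tsum_ofReal_two_mul_pow_rpow (hβ : 0 < β) (ht : 0 ≤ t) (ht1 : t < 1) (n : ℕ) :
    ∑' k : ℕ, ENNReal.ofReal ((2 * t ^ (k + n + 1)) ^ β) =
      ENNReal.ofReal (2 ^ β / (1 - t ^ β) * (t ^ (n + 1)) ^ β) := by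
  have hterm (k : ℕ) : (2 * t ^ (k + n + 1)) ^ β = 2 ^ β * (t ^ (n + 1)) ^ β * (t ^ β) ^ k := by
    rw [Real.mul_rpow zero_le_two (by positivity), add_assoc, pow_add,
      Real.mul_rpow (by positivity) (by positivity), ← Real.rpow_pow_comm ht]
    ring
  have htβ : t ^ β < 1 := Real.rpow_lt_one ht ht1 hβ
  simp_rw [hterm]
  rw [← ENNReal.ofReal_tsum_of_nonneg (fun k => by positivity)
    ((summable_geometric_of_lt_one (by positivity) htβ).mul_left _), tsum_mul_left,
    tsum_geometric_of_lt_one (by positivity) htβ]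
  ring_nf

theorem tsum_measure_ball_le (hβ : 0 < β) (ht : 0 < t) (hθ : 4 * t ≤ θ) (ht1 : t < 1)
    {ν : ℕ → Measure (𝔼 d)}
    (hsupp : ∀ k, ν k (closedBall x (t ^ (k + 1)) \ ball x (θ * t ^ (k + 1)))ᶜ = 0)
    (hmass : ∀ k, ν k univ ≤ ENNReal.ofReal ((2 * t ^ (k + 1)) ^ β))
    (hball : ∀ k y r, 0 < r → ν k (ball y r) ≤ 5 ^ d * ENNReal.ofReal ((2 * r) ^ β))
    (y : 𝔼 d) {r : ℝ} (hr : 0 < r) :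
    ∑' k, ν k (ball y r) ≤ ENNReal.ofReal ((5 ^ d * 2 ^ β + 2 ^ β / (1 - t ^ β)) * r ^ β) := by
  have htβ : 0 ≤ 1 - t ^ β := sub_nonneg.2 (Real.rpow_lt_one ht.le ht1 hβ).le
  have hex : ∃ n, t ^ (n + 1) < r := by
    obtain ⟨n, hn⟩ := exists_pow_lt_of_lt_one hr ht1
    exact ⟨n, (pow_le_pow_of_le_one ht.le ht1.le n.le_succ).trans_lt hn⟩
  have hmeet k (hk : ν k (ball y r) ≠ 0) :
      ∃ p, p ∈ ball y r ∩ (closedBall x (t ^ (k + 1)) \ ball x (θ * t ^ (k + 1))) :=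
    by_contra fun h => hk (measure_mono_null (fun z hz hz' => h ⟨z, hz, hz'⟩) (hsupp k))
  -- the ball meets at most one of the annuli of radius larger than `r`
  have hhead : ∑ k ∈ Finset.range (Nat.find hex), ν k (ball y r) ≤
      5 ^ d * ENNReal.ofReal ((2 * r) ^ β) := by
    by_cases h : ∃ k ∈ Finset.range (Nat.find hex), ν k (ball y r) ≠ 0
    · obtain ⟨k, hk, hk0⟩ := h
      refine (Finset.sum_eq_single_of_mem k hk fun j hj hjk => by_contra fun hj0 => ?_).trans_le
        (hball k y r hr)
      obtain ⟨p, hp⟩ := hmeet j hj0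
      obtain ⟨q, hq⟩ := hmeet k hk0
      rcases hjk.lt_or_gt with h | h
      · exact Nat.find_min hex (Finset.mem_range.1 hk)
          (pow_succ_lt_of_mem_annuli ht hθ ht1.le h hp hq)
      · exact Nat.find_min hex (Finset.mem_range.1 hj)
          (pow_succ_lt_of_mem_annuli ht hθ ht1.le h hq hp)
    · push Not at h
      rw [Finset.sum_eq_zero h]
      exact zero_le
  have htail : ∑' k, ν (k + Nat.find hex) (ball y r) ≤
      ENNReal.ofReal (2 ^ β / (1 - t ^ β) * r ^ β) := by
    calc ∑' k, ν (k + Nat.find hex) (ball y r)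
        ≤ ∑' k, ENNReal.ofReal ((2 * t ^ (k + Nat.find hex + 1)) ^ β) :=
          ENNReal.tsum_le_tsum fun k => (measure_mono (subset_univ _)).trans (hmass _)
      _ = ENNReal.ofReal (2 ^ β / (1 - t ^ β) * (t ^ (Nat.find hex + 1)) ^ β) :=
          tsum_ofReal_two_mul_pow_rpow hβ ht.le ht1 _
      _ ≤ ENNReal.ofReal (2 ^ β / (1 - t ^ β) * r ^ β) := by
          gcongr
          exact (Nat.find_spec hex).le
  rw [← ENNReal.summable.sum_add_tsum_nat_add' (k := Nat.find hex)]
  refine (add_le_add hhead htail).trans_eq ?_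
  rw [show (5 : ℝ≥0∞) ^ d = ENNReal.ofReal (5 ^ d) by simp, ← ENNReal.ofReal_mul (by positivity),
    ← ENNReal.ofReal_add (by positivity) (by positivity), Real.mul_rpow zero_le_two hr.le]
  ring_nf

theorem le_tsum_measure_ball (hβ : 0 ≤ β) (ht : 0 < t) (ht1 : t < 1) {a : ℝ} (ha : 0 ≤ a)
    {ν : ℕ → Measure (𝔼 d)}
    (hsupp : ∀ k, ν k (closedBall x (t ^ (k + 1)) \ ball x (θ * t ^ (k + 1)))ᶜ = 0)
    (hlow : ∀ k, ENNReal.ofReal (a * (t ^ (k + 1)) ^ β) ≤ ν k univ) {r : ℝ} (hr : 0 < r)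
    (hr1 : r ≤ 1) :
    ENNReal.ofReal (a * t ^ β * r ^ β) ≤ ∑' k, ν k (ball x r) := by
  obtain ⟨n, hn, hn'⟩ := exists_nat_pow_near_of_lt_one hr hr1 ht ht1
  calc ENNReal.ofReal (a * t ^ β * r ^ β) ≤ ENNReal.ofReal (a * (t ^ (n + 1)) ^ β) := by
        rw [mul_assoc, ← Real.mul_rpow ht.le hr.le, pow_succ']
        gcongr
    _ ≤ ν n univ := hlow n
    _ ≤ ν n (ball x r) := by
        refine (measure_univ_le_add_compl (ball x r)).trans_eq ?_
        rw [measure_mono_null (compl_subset_compl.2 (sdiff_subset.trans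
          (closedBall_subset_ball hn))) (hsupp n), add_zero]
    _ ≤ ∑' k, ν k (ball x r) := ENNReal.le_tsum n

end Scales

theorem exists_frostman_measure_of_pos (hβ : 0 < β) {C : ℝ} (hC : 0 < C) :
    ∃ c : ℝ, 0 < c ∧ ∀ Ω : Set (𝔼 d), IsOpen Ω → ∀ x : 𝔼 d,
      (∀ r, 0 < r → r < 1 → ENNReal.ofReal (C * r ^ β) ≤ hausdorffContent d β (ball x r \ Ω)) →
      ∃ μ : Measure (𝔼 d), μ Ω = 0 ∧ (∀ y r, 0 < r → μ (ball y r) ≤ ENNReal.ofReal (r ^ β)) ∧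
        ∀ r, 0 < r → r < 1 → ENNReal.ofReal (c * r ^ β) ≤ μ (ball x r) := by
  set θ := min ((C / 2) ^ β⁻¹) (1 / 2)
  set t := θ / 4 with ht_def
  have hθ : 0 < θ := lt_min (by positivity) (by norm_num)
  have hθC : θ ^ β ≤ C / 2 := (Real.rpow_le_rpow hθ.le (min_le_left _ _) hβ.le).trans_eq
    (Real.rpow_inv_rpow (by positivity) hβ.ne')
  have ht : 0 < t := by positivity
  have ht1 : t < 1 := by linarith [min_le_right ((C / 2) ^ β⁻¹) (1 / 2 : ℝ)]
  have htβ : 0 < 1 - t ^ β := sub_pos.2 (Real.rpow_lt_one ht.le ht1 hβ)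
  set Λ := 5 ^ d * 2 ^ β + 2 ^ β / (1 - t ^ β)
  set a := C / 2 / (5 ^ d * (√d + 1) ^ β)
  have hΛ : 0 < Λ := by positivity
  refine ⟨Λ⁻¹ * (a * t ^ β), by positivity, fun Ω hΩ x hthick => ?_⟩
  choose ν hsupp hmass hlow hball using fun k : ℕ => exists_measure_on_annulus hβ hΩ
    (pow_pos ht (k + 1)) hθ.le hθC (hthick _ (pow_pos ht _) (pow_lt_one₀ ht.le ht1 k.succ_ne_zero))
  have hann k : ν k (closedBall x (t ^ (k + 1)) \ ball x (θ * t ^ (k + 1)))ᶜ = 0 :=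
    measure_mono_null (compl_subset_compl.2 inter_subset_right) (hsupp k)
  refine ⟨ENNReal.ofReal Λ⁻¹ • Measure.sum ν, ?_, fun y r hr => ?_, fun r hr hr1 => ?_⟩
  · simp [Measure.sum_apply _ hΩ.measurableSet,
      fun k => measure_mono_null (fun z hz h => h.1 hz) (hsupp k)]
  · rw [Measure.smul_apply, Measure.sum_apply _ measurableSet_ball, smul_eq_mul]
    calc ENNReal.ofReal Λ⁻¹ * ∑' k, ν k (ball y r)
        ≤ ENNReal.ofReal Λ⁻¹ * ENNReal.ofReal (Λ * r ^ β) :=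
          mul_le_mul_right (tsum_measure_ball_le hβ ht (by linarith) ht1 hann hmass hball y hr) _
      _ = ENNReal.ofReal (r ^ β) := by
          rw [← ENNReal.ofReal_mul (by positivity), ← mul_assoc, inv_mul_cancel₀ hΛ.ne', one_mul]
  · rw [Measure.smul_apply, Measure.sum_apply _ measurableSet_ball, smul_eq_mul, mul_assoc,
      ENNReal.ofReal_mul (by positivity)]
    exact mul_le_mul_right (le_tsum_measure_ball hβ.le ht ht1 (by positivity) hann hlow hr hr1.le) _

end

end Frostman

theorem exists_frostman_measure_general
    (d : ℕ) (α : ℝ) (hαd : α ≤ d) (C : ℝ) (hC : 0 < C) :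
    ∃ c : ℝ, 0 < c ∧
      ∀ (Ω : Set (EuclideanSpace ℝ (Fin d))), IsOpen Ω → Bornology.IsBounded Ω →
        IsAlphaThick d α C Ω →
        ∀ x ∈ frontier Ω,
          ∃ μ : Measure (EuclideanSpace ℝ (Fin d)),
            μ Ω = 0 ∧
            (∀ (y : EuclideanSpace ℝ (Fin d)) (r : ℝ), 0 < r →
              μ (ball y r) ≤ ENNReal.ofReal (r ^ ((d : ℝ) - α))) ∧
            (∀ r : ℝ, 0 < r → r < 1 →
              ENNReal.ofReal (c * r ^ ((d : ℝ) - α)) ≤ μ (ball x r)) := by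
  rcases (sub_nonneg.2 hαd).eq_or_lt with hβ | hβ
  · refine ⟨1, one_pos, fun Ω hΩ _ _ x hx =>
      ⟨Measure.dirac x, ?_, fun y r _ => ?_, fun r hr _ => ?_⟩⟩
    · have hxΩ : x ∉ Ω := by
        rw [hΩ.frontier_eq] at hx
        exact hx.2
      simp [Measure.dirac_apply' x hΩ.measurableSet, hxΩ]
    · rw [← hβ, Real.rpow_zero, ENNReal.ofReal_one]
      exact prob_le_one
    · rw [← hβ, Real.rpow_zero, mul_one, ENNReal.ofReal_one,
        Measure.dirac_apply_of_mem (mem_ball_self hr)]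
  · obtain ⟨c, hc, hfrostman⟩ := Frostman.exists_frostman_measure_of_pos (d := d) hβ hC
    exact ⟨c, hc, fun Ω hΩ _ hthick x hx => hfrostman Ω hΩ x (hthick x hx)⟩

/-- Lemma 2.1, Frostman-type: for an α-thick domain Ω with constant C,
there is c = c(α,d,C) > 0 such that every x ∈ ∂Ω carries a Borel measure μ_x with
μ_x(Ω) = 0, μ_x(B(y,r)) ≤ r^{d−α} for all y, r > 0, and μ_x(B(x,r)) ≥ c r^{d−α}
for r < 1. -/
theorem exists_frostman_measure
    (d : ℕ) (α : ℝ) (hα0 : 0 ≤ α) (hαd : α ≤ d) (C : ℝ) (hC : 0 < C) :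
    ∃ c : ℝ, 0 < c ∧
      ∀ (Ω : Set (EuclideanSpace ℝ (Fin d))), IsOpen Ω → Bornology.IsBounded Ω →
        IsAlphaThick d α C Ω →
        ∀ x ∈ frontier Ω,
          ∃ μ : Measure (EuclideanSpace ℝ (Fin d)),
            μ Ω = 0 ∧
            (∀ (y : EuclideanSpace ℝ (Fin d)) (r : ℝ), 0 < r →
              μ (ball y r) ≤ ENNReal.ofReal (r ^ ((d : ℝ) - α))) ∧
            (∀ r : ℝ, 0 < r → r < 1 →
              ENNReal.ofReal (c * r ^ ((d : ℝ) - α)) ≤ μ (ball x r)) :=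
  exists_frostman_measure_general d α hαd C hC
end
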